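/- arXiv:math/0505154 — 4 statements merged into one kernel-verified Lean document; each statement's English description precedes it below -/
import Mathlib

section
/- Every contraction T on a Hilbert space H has a co-isometric extension: there exists a Hilbert space K containing H (via an isometric embedding) and a co-isometry W on K (i.e., W W* = I) such that W restricted to H equals T. -/
open ContinuousLinearMap

/-- A co-isometric extension of an operator `T` on a Hilbert space `H`:
a Hilbert space `K` containing `H` (via an isometric embedding) together with
a co-isometry `W` on `K` whose restriction to (the image of) `H` equals `T`. -/
structure CoisometricExtension {H : Type} [NormedAddCommGroup H]
    [InnerProductSpace ℂ H] [CompleteSpace H] (T : H →L[ℂ] H) where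
  K : Type
  [grp : NormedAddCommGroup K]
  [ips : InnerProductSpace ℂ K]
  [cpl : CompleteSpace K]
  emb : H →ₗᵢ[ℂ] K
  W : K →L[ℂ] K
  coisometry : W ∘L ContinuousLinearMap.adjoint W = 1
  extend : ∀ x : H, W (emb x) = emb (T x)

/-!
With `D = (1 - T T*)^{1/2}` one has `‖T* h‖² + ‖D h‖² = ‖h‖²`, so
`V (h, η) = (T* h, D h :: η)` is an isometry of `K = H ⊕ ℓ²(ℕ, H)`, the standard isometric
dilation of `T*`. Hence `W = V*` satisfies `W W* = V* V = 1`, and `W (x, 0) = (T x, 0)` because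
the `H`-component of `V` is `T*`.
-/

namespace lp

variable {𝕜 E : Type*} [RCLike 𝕜] [NormedAddCommGroup E]

def cons (y : E) (η : lp (fun _ : ℕ => E) 2) : lp (fun _ : ℕ => E) 2 :=
  ⟨fun n => Nat.casesOn n y η, by
    refine memℓp_gen ((summable_nat_add_iff 1).1 ?_)
    simpa using (lp.memℓp η).summable (by norm_num)⟩

@[simp] lemma cons_zero (y : E) (η : lp (fun _ : ℕ => E) 2) : cons y η 0 = y := rfl

@[simp] lemma cons_succ (y : E) (η : lp (fun _ : ℕ => E) 2) (n : ℕ) :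
    cons y η (n + 1) = η n := rfl

lemma cons_add (y y' : E) (η η' : lp (fun _ : ℕ => E) 2) :
    cons (y + y') (η + η') = cons y η + cons y' η' := by
  ext (_ | n) <;> rfl

lemma cons_smul [NormedSpace 𝕜 E] (c : 𝕜) (y : E) (η : lp (fun _ : ℕ => E) 2) :
    cons (c • y) (c • η) = c • cons y η := by
  ext (_ | n) <;> rfl

lemma inner_cons_cons [InnerProductSpace 𝕜 E] (y y' : E) (η η' : lp (fun _ : ℕ => E) 2) :
    inner 𝕜 (cons y η) (cons y' η') = inner 𝕜 y y' + inner 𝕜 η η' := by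
  rw [lp.inner_eq_tsum, lp.inner_eq_tsum,
    (lp.summable_inner (𝕜 := 𝕜) (cons y η) (cons y' η')).tsum_eq_zero_add]
  simp only [cons_zero, cons_succ]

end lp

namespace CStarAlgebra

variable {A : Type*} [CStarAlgebra A] [PartialOrder A] [StarOrderedRing A]

noncomputable def defect (a : A) : A := CFC.sqrt (1 - star a * a)

lemma star_mul_self_add_defect_mul_defect {a : A} (ha : ‖a‖ ≤ 1) :
    star a * a + star (defect a) * defect a = 1 := by
  have h : 0 ≤ 1 - star a * a := by
    rw [sub_nonneg, ← norm_le_one_iff_of_nonneg _ (star_mul_self_nonneg a),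
      CStarRing.norm_star_mul_self]
    nlinarith [norm_nonneg a]
  rw [defect, (IsSelfAdjoint.of_nonneg (CFC.sqrt_nonneg (1 - star a * a))).star_eq,
    CFC.sqrt_mul_sqrt_self _ h, add_sub_cancel]

end CStarAlgebra

lemma ContinuousLinearMap.inner_map_add_inner_map {𝕜 H : Type*} [RCLike 𝕜]
    [NormedAddCommGroup H] [InnerProductSpace 𝕜 H] [CompleteSpace H] {S D : H →L[𝕜] H}
    (h : star S * S + star D * D = 1) (a b : H) :
    inner 𝕜 (S a) (S b) + inner 𝕜 (D a) (D b) = inner 𝕜 a b :=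
  calc _ = inner 𝕜 a ((star S * S + star D * D) b) := by
        simp [inner_add_right, star_eq_adjoint, adjoint_inner_right]
    _ = inner 𝕜 a b := by rw [h]; rfl

noncomputable section

variable {𝕜 H K E : Type*} [RCLike 𝕜] [NormedAddCommGroup H] [InnerProductSpace 𝕜 H]
  [NormedAddCommGroup K] [InnerProductSpace 𝕜 K] [NormedAddCommGroup E] [InnerProductSpace 𝕜 E]

def WithLp.inlIsometry : H →ₗᵢ[𝕜] WithLp 2 (H × E) where
  toLinearMap := (WithLp.linearEquiv 2 𝕜 (H × E)).symm.toLinearMap ∘ₗ LinearMap.inl 𝕜 H E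
  norm_map' := WithLp.norm_toLp_fst 2 H E

@[simp] lemma WithLp.inlIsometry_apply (x : H) :
    (WithLp.inlIsometry (𝕜 := 𝕜) x : WithLp 2 (H × E)) = WithLp.toLp 2 (x, 0) := rfl

def dilationIsometry (S : H →L[𝕜] K) (D : H →L[𝕜] E)
    (h : ∀ a b, inner 𝕜 (S a) (S b) + inner 𝕜 (D a) (D b) = inner 𝕜 a b) :
    WithLp 2 (H × lp (fun _ : ℕ => E) 2) →ₗᵢ[𝕜] WithLp 2 (K × lp (fun _ : ℕ => E) 2) :=
  LinearMap.isometryOfInner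
    { toFun z := WithLp.toLp 2 (S z.fst, lp.cons (D z.fst) z.snd)
      map_add' z w := by
        simp only [WithLp.add_fst, WithLp.add_snd, map_add, lp.cons_add]; rfl
      map_smul' c z := by
        simp only [WithLp.smul_fst, WithLp.smul_snd, map_smul, lp.cons_smul]; rfl }
    fun z w => by
      simp only [LinearMap.coe_mk, AddHom.coe_mk, WithLp.prod_inner_apply, lp.inner_cons_cons]
      rw [← add_assoc, h]; rfl

@[simp] lemma dilationIsometry_apply (S : H →L[𝕜] K) (D : H →L[𝕜] E)
    (h : ∀ a b, inner 𝕜 (S a) (S b) + inner 𝕜 (D a) (D b) = inner 𝕜 a b)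
    (z : WithLp 2 (H × lp (fun _ : ℕ => E) 2)) :
    dilationIsometry S D h z = WithLp.toLp 2 (S z.fst, lp.cons (D z.fst) z.snd) := rfl

end

noncomputable def CoisometricExtension.ofIsometry {H : Type} [NormedAddCommGroup H]
    [InnerProductSpace ℂ H] [CompleteSpace H] {T : H →L[ℂ] H} {K : Type} [NormedAddCommGroup K]
    [InnerProductSpace ℂ K] [CompleteSpace K] (ι : H →ₗᵢ[ℂ] K) (V : K →ₗᵢ[ℂ] K)
    (h : ∀ x z, inner ℂ (ι (T x)) z = inner ℂ (ι x) (V z)) : CoisometricExtension T where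
  K := K
  emb := ι
  W := adjoint V.toContinuousLinearMap
  coisometry := by rw [adjoint_adjoint, V.adjoint_comp_self]
  extend x := ext_inner_right ℂ fun z => by
    rw [adjoint_inner_left]
    exact (h x z).symm

/-- Every contraction on a Hilbert space has a co-isometric extension. -/
theorem contraction_has_coisometric_extension {H : Type} [NormedAddCommGroup H]
    [InnerProductSpace ℂ H] [CompleteSpace H] (T : H →L[ℂ] H) (hT : ‖T‖ ≤ 1) :
    Nonempty (CoisometricExtension T) := by
  have hD := CStarAlgebra.star_mul_self_add_defect_mul_defect (a := star T) (by rwa [norm_star])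
  refine ⟨.ofIsometry WithLp.inlIsometry
    (dilationIsometry (star T) _ (inner_map_add_inner_map hD)) fun x z => ?_⟩
  simp [star_eq_adjoint, adjoint_inner_right]
end

section
/- Every contraction T on a Hilbert space H has a unitary dilation: there exists a Hilbert space K containing H and a unitary U on K such that T^n = P U^n |_H for all n ≥ 0, where P is the orthogonal projection of K onto H. -/
open ContinuousLinearMap

/-- A unitary dilation of an operator `T` on a Hilbert space `H`: a Hilbert space `K`
containing `H` isometrically and a unitary `U` on `K` with `T^n = P U^n |_H` for all
`n ≥ 0`.  The compression condition `T^n = P U^n |_H` (with `P` the orthogonal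
projection of `K` onto `H`) is expressed equivalently via inner products:
`⟪U^n (emb x), emb y⟫ = ⟪T^n x, y⟫` for all `x y : H`. -/
structure UnitaryDilation {H : Type} [NormedAddCommGroup H]
    [InnerProductSpace ℂ H] [CompleteSpace H] (T : H →L[ℂ] H) where
  K : Type
  [grp : NormedAddCommGroup K]
  [ips : InnerProductSpace ℂ K]
  [cpl : CompleteSpace K]
  emb : H →ₗᵢ[ℂ] K
  U : K →L[ℂ] K
  unitary_right : U ∘L ContinuousLinearMap.adjoint U = 1
  unitary_left : ContinuousLinearMap.adjoint U ∘L U = 1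
  dilation : ∀ (n : ℕ) (x y : H),
    (inner ℂ ((U ^ n) (emb x)) (emb y) : ℂ) = (inner ℂ ((T ^ n) x) y : ℂ)

/-! Schäffer's construction. Let `D_T = (1 - T*T)^{1/2}` and `D_{T*} = (1 - TT*)^{1/2}`. Since
`T * f(T*T) = f(TT*) * T` for every continuous `f` (true for polynomials, hence by Weierstrass
approximation for all `f`), we get `T D_T = D_{T*} T`, and this makes the Julia operator
`J = [[D_{T*}, T], [-T*, D_T]]` on `H ⊕ H` unitary: its adjoint is the Julia operator of `-T`,
which is also its inverse. On `ℓ²(ℤ, H)`, with `H` as the `0`-th coordinate, let `U` apply `J` to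
the coordinates `(-1, 0)` and then shift every coordinate one step to the right. Then `U` is
unitary, it preserves the vectors vanishing at negative indices, and on those its `0`-th
coordinate is `T` applied to the `0`-th coordinate; hence the `0`-th coordinate of `Uⁿ x` is
`Tⁿ x`. -/

section Intertwining

open Polynomial

theorem SemiconjBy.aeval {R A : Type*} [CommSemiring R] [Semiring A] [Algebra R A]
    {t a b : A} (h : SemiconjBy t a b) (p : R[X]) :
    SemiconjBy t (aeval a p) (aeval b p) := by
  induction p using Polynomial.induction_on' with
  | add p q hp hq => simpa only [map_add] using hp.add_right hq
  | monomial n r =>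
    simpa only [aeval_monomial] using
      SemiconjBy.mul_right (Algebra.commute_algebraMap_right r t) (h.pow_right n)

theorem SemiconjBy.cfc_real {A : Type*} [CStarAlgebra A] {t a b : A} (h : SemiconjBy t a b)
    (ha : IsSelfAdjoint a) (hb : IsSelfAdjoint b) {f : ℝ → ℝ} (hf : Continuous f) :
    SemiconjBy t (cfc f a) (cfc f b) := by
  cases subsingleton_or_nontrivial A
  · exact Subsingleton.elim _ _
  set R := max ‖a‖ ‖b‖
  have hspec {c : A} (hc : ‖c‖ ≤ R) : spectrum ℝ c ⊆ Set.Icc (-R) R := fun x hx =>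
    abs_le.mp ((spectrum.norm_le_norm_of_mem hx).trans hc)
  have happrox {c : A} (hc : IsSelfAdjoint c) (hcR : ‖c‖ ≤ R) {p : ℝ[X]} {δ : ℝ} (hδ : 0 < δ)
      (hp : ∀ x ∈ Set.Icc (-R) R, |p.eval x - f x| < δ) : ‖cfc f c - Polynomial.aeval c p‖ ≤ δ := by
    rw [← cfc_polynomial p c, ← cfc_sub f _ c]
    exact norm_cfc_le hδ.le fun x hx => by
      simpa [Real.norm_eq_abs, abs_sub_comm] using (hp x (hspec hcR hx)).le
  refine eq_of_forall_dist_le fun ε hε => ?_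
  set δ := ε / (2 * ‖t‖ + 1) with hδ_def
  have hδ : 0 < δ := by positivity
  obtain ⟨p, hp⟩ := exists_polynomial_near_of_continuousOn (-R) R f hf.continuousOn δ hδ
  have hpoly : t * Polynomial.aeval a p = Polynomial.aeval b p * t := (h.aeval p).eq
  calc dist (t * cfc f a) (cfc f b * t)
      = ‖t * (cfc f a - Polynomial.aeval a p) - (cfc f b - Polynomial.aeval b p) * t‖ := by
        rw [dist_eq_norm, mul_sub, sub_mul, hpoly]; congr 1; abel
    _ ≤ ‖t‖ * δ + δ * ‖t‖ := by
        refine (norm_sub_le _ _).trans (add_le_add ?_ ?_)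
        · exact (norm_mul_le _ _).trans (by gcongr; exact happrox ha (le_max_left _ _) hδ hp)
        · exact (norm_mul_le _ _).trans (by gcongr; exact happrox hb (le_max_right _ _) hδ hp)
    _ ≤ ε := by
        rw [show ‖t‖ * δ + δ * ‖t‖ = ε * (2 * ‖t‖ / (2 * ‖t‖ + 1)) by rw [hδ_def]; ring]
        exact mul_le_of_le_one_right hε.le ((div_le_one (by positivity)).2 (by linarith))

end Intertwining

section Defect

variable {A : Type*} [CStarAlgebra A] [PartialOrder A] [StarOrderedRing A]

theorem one_sub_star_mul_self_nonneg {a : A} (ha : ‖a‖ ≤ 1) : 0 ≤ 1 - star a * a := by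
  refine sub_nonneg.2 ((CStarAlgebra.norm_le_one_iff_of_nonneg _ (star_mul_self_nonneg a)).1 ?_)
  rw [CStarRing.norm_star_mul_self]
  exact mul_le_one₀ ha (norm_nonneg a) ha

noncomputable def defect (a : A) : A := CFC.sqrt (1 - star a * a)

theorem isSelfAdjoint_defect (a : A) : IsSelfAdjoint (defect a) :=
  .of_nonneg (CFC.sqrt_nonneg _)

theorem defect_mul_self {a : A} (ha : ‖a‖ ≤ 1) : defect a * defect a = 1 - star a * a :=
  CFC.sqrt_mul_sqrt_self _ (one_sub_star_mul_self_nonneg ha)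

theorem defect_neg (a : A) : defect (-a) = defect a := by
  simp [defect]

theorem mul_defect {a : A} (ha : ‖a‖ ≤ 1) : a * defect a = defect (star a) * a := by
  have ha' : ‖star a‖ ≤ 1 := by rwa [norm_star]
  have hsemi : SemiconjBy a (1 - star a * a) (1 - star (star a) * star a) := by
    simp only [SemiconjBy, star_star, mul_sub, sub_mul, mul_one, one_mul, mul_assoc]
  have h₁ := one_sub_star_mul_self_nonneg ha
  have h₂ := one_sub_star_mul_self_nonneg ha'
  simp only [defect, CFC.sqrt_eq_real_sqrt _ h₁, CFC.sqrt_eq_real_sqrt _ h₂]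
  rw [cfcₙ_eq_cfc, cfcₙ_eq_cfc]
  exact hsemi.cfc_real (.of_nonneg h₁) (.of_nonneg h₂) Real.continuous_sqrt

theorem defect_mul_star {a : A} (ha : ‖a‖ ≤ 1) : defect a * star a = star a * defect (star a) := by
  simpa [(isSelfAdjoint_defect _).star_eq] using congrArg star (mul_defect ha)

end Defect

namespace lp

open scoped ENNReal

section Norm

variable {α : Type*} {E : α → Type*} [∀ i, NormedAddCommGroup (E i)] {p : ℝ≥0∞}

theorem norm_eq_of_sum_eq_of_forall_notMem [DecidableEq α] (hp : 0 < p.toReal) {f g : lp E p}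
    (s : Finset α) (hs : ∑ i ∈ s, ‖f i‖ ^ p.toReal = ∑ i ∈ s, ‖g i‖ ^ p.toReal)
    (hfg : ∀ i ∉ s, f i = g i) : ‖f‖ = ‖g‖ := by
  have hcompl : f - ∑ i ∈ s, lp.single p i (f i) = g - ∑ i ∈ s, lp.single p i (g i) := by
    ext i
    simp only [coeFn_sub, coeFn_sum, lp.coeFn_single, Pi.sub_apply, Finset.sum_apply,
      Finset.sum_pi_single]
    by_cases hi : i ∈ s <;> simp [hi, hfg]
  have hf := lp.norm_sub_norm_compl_sub_single hp f s
  have hg := lp.norm_sub_norm_compl_sub_single hp g s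
  rw [hcompl] at hf
  refine Real.rpow_left_injOn hp.ne' (lp.norm_nonneg' _) (lp.norm_nonneg' _) ?_
  beta_reduce
  linarith

end Norm

section Single

variable (𝕜 : Type*) {α : Type*} (E : α → Type*) (p : ℝ≥0∞) [NormedRing 𝕜]
  [∀ i, NormedAddCommGroup (E i)] [∀ i, Module 𝕜 (E i)] [∀ i, IsBoundedSMul 𝕜 (E i)]
  [DecidableEq α] [Fact (1 ≤ p)]

def singleₗᵢ (i : α) : E i →ₗᵢ[𝕜] lp E p where
  __ := lsingle p i
  norm_map' := lp.norm_single (zero_lt_one.trans_le Fact.out) i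

@[simp]
theorem singleₗᵢ_apply (i : α) (x : E i) : singleₗᵢ 𝕜 E p i x = lp.single p i x :=
  rfl

end Single

section Reindex

variable {𝕜 ι ι' E : Type*} [NormedRing 𝕜] [NormedAddCommGroup E] [Module 𝕜 E] [IsBoundedSMul 𝕜 E]
  {p : ℝ≥0∞}

theorem memℓp_comp_equiv (hp : 0 < p.toReal) (e : ι ≃ ι') (f : lp (fun _ : ι' => E) p) :
    Memℓp (fun i => f (e i)) p := by
  have hf := lp.memℓp f
  rw [memℓp_gen_iff hp] at hf ⊢
  exact (e.summable_iff (f := fun i => ‖f i‖ ^ p.toReal)).2 hf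

variable [Fact (1 ≤ p)]

def reindexₗᵢ (hp : 0 < p.toReal) (e : ι ≃ ι') :
    lp (fun _ : ι' => E) p ≃ₗᵢ[𝕜] lp (fun _ : ι => E) p where
  toFun f := ⟨fun i => f (e i), memℓp_comp_equiv hp e f⟩
  invFun f := ⟨fun i => f (e.symm i), memℓp_comp_equiv hp e.symm f⟩
  map_add' _ _ := rfl
  map_smul' _ _ := rfl
  left_inv f := by ext i; simp
  right_inv f := by ext i; simp
  norm_map' f := by
    refine Real.rpow_left_injOn hp.ne' (norm_nonneg _) (norm_nonneg _) ?_
    simp only [lp.norm_rpow_eq_tsum hp]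
    exact e.tsum_eq fun i => ‖f i‖ ^ p.toReal

end Reindex

section UpdatePair

variable {𝕜 ι E : Type*} [NormedRing 𝕜] [NormedAddCommGroup E] [Module 𝕜 E] [IsBoundedSMul 𝕜 E]
  [DecidableEq ι] {i j : ι}

noncomputable def updatePair (i j : ι) (f : WithLp 2 (E × E) → WithLp 2 (E × E))
    (ξ : lp (fun _ : ι => E) 2) : lp (fun _ : ι => E) 2 :=
  ξ + lp.single 2 i ((f (WithLp.toLp 2 (ξ i, ξ j))).fst - ξ i)
    + lp.single 2 j ((f (WithLp.toLp 2 (ξ i, ξ j))).snd - ξ j)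

theorem updatePair_apply (hij : i ≠ j) (f : WithLp 2 (E × E) → WithLp 2 (E × E))
    (ξ : lp (fun _ : ι => E) 2) (k : ι) :
    updatePair i j f ξ k =
      if k = i then (f (WithLp.toLp 2 (ξ i, ξ j))).fst
      else if k = j then (f (WithLp.toLp 2 (ξ i, ξ j))).snd else ξ k := by
  simp only [updatePair, coeFn_add, Pi.add_apply, lp.single_apply]
  split_ifs with hi hj <;> subst_vars <;> simp_all

theorem updatePair_pair (hij : i ≠ j) (f : WithLp 2 (E × E) → WithLp 2 (E × E))
    (ξ : lp (fun _ : ι => E) 2) :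
    WithLp.toLp 2 (updatePair i j f ξ i, updatePair i j f ξ j) = f (WithLp.toLp 2 (ξ i, ξ j)) := by
  simp only [updatePair_apply hij, ↓reduceIte, hij.symm]
  rfl

theorem updatePair_leftInverse (hij : i ≠ j) {f g : WithLp 2 (E × E) → WithLp 2 (E × E)}
    (h : Function.LeftInverse g f) :
    Function.LeftInverse (updatePair i j g) (updatePair i j f) := fun ξ => by
  ext k
  rw [updatePair_apply hij, updatePair_pair hij, h]
  split_ifs <;> simp_all [updatePair_apply hij]

theorem norm_updatePair (hij : i ≠ j) {f : WithLp 2 (E × E) → WithLp 2 (E × E)}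
    (hf : ∀ z, ‖f z‖ = ‖z‖) (ξ : lp (fun _ : ι => E) 2) : ‖updatePair i j f ξ‖ = ‖ξ‖ := by
  refine norm_eq_of_sum_eq_of_forall_notMem (by norm_num) {i, j} ?_ fun k hk => ?_
  · have := congrArg (· ^ 2) (hf (WithLp.toLp 2 (ξ i, ξ j)))
    simp only [WithLp.prod_norm_sq_eq_of_L2] at this
    simpa [Finset.sum_pair hij, updatePair_apply hij, hij.symm] using this
  · simp only [Finset.mem_insert, Finset.mem_singleton, not_or] at hk
    simp [updatePair_apply hij, hk.1, hk.2]

noncomputable def updatePairₗᵢ (hij : i ≠ j) (M : WithLp 2 (E × E) ≃ₗᵢ[𝕜] WithLp 2 (E × E)) :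
    lp (fun _ : ι => E) 2 ≃ₗᵢ[𝕜] lp (fun _ : ι => E) 2 where
  toFun := updatePair i j M
  invFun := updatePair i j M.symm
  map_add' ξ η := by
    ext k
    simp only [updatePair_apply hij, coeFn_add, Pi.add_apply]
    split_ifs <;>
      simp only [← Prod.mk_add_mk, WithLp.toLp_add, map_add, WithLp.add_fst, WithLp.add_snd]
  map_smul' c ξ := by
    ext k
    simp only [updatePair_apply hij, coeFn_smul, Pi.smul_apply, RingHom.id_apply]
    split_ifs <;>
      simp only [← Prod.smul_mk, WithLp.toLp_smul, map_smul, WithLp.smul_fst, WithLp.smul_snd]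
  left_inv := updatePair_leftInverse hij M.symm_apply_apply
  right_inv := updatePair_leftInverse hij M.apply_symm_apply
  norm_map' := norm_updatePair hij M.norm_map

end UpdatePair

end lp

@[ext]
theorem WithLp.prod_ext {p : ENNReal} {α β : Type*} {x y : WithLp p (α × β)}
    (h₁ : x.fst = y.fst) (h₂ : x.snd = y.snd) : x = y :=
  (WithLp.ext_iff p).2 (Prod.ext h₁ h₂)

section Julia

variable {H : Type*} [NormedAddCommGroup H] [InnerProductSpace ℂ H] [CompleteSpace H]

noncomputable def juliaMap (T : H →L[ℂ] H) : WithLp 2 (H × H) →ₗ[ℂ] WithLp 2 (H × H) where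
  toFun z := WithLp.toLp 2
    (defect (adjoint T) z.fst + T z.snd, -(adjoint T) z.fst + defect T z.snd)
  map_add' z w := by
    ext <;> simp only [WithLp.add_fst, WithLp.add_snd, map_add, WithLp.toLp_fst,
      WithLp.toLp_snd, neg_add] <;> abel
  map_smul' c z := by ext <;> simp

theorem juliaMap_apply (T : H →L[ℂ] H) (z : WithLp 2 (H × H)) :
    juliaMap T z = WithLp.toLp 2
      (defect (adjoint T) z.fst + T z.snd, -(adjoint T) z.fst + defect T z.snd) := rfl

theorem inner_juliaMap (T : H →L[ℂ] H) (z w : WithLp 2 (H × H)) :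
    inner ℂ (juliaMap T z) w = inner ℂ z (juliaMap (-T) w) := by
  have hD : ∀ x y : H, inner ℂ (defect T x) y = inner ℂ x (defect T y) :=
    (isSelfAdjoint_defect T).isSymmetric
  have hD' : ∀ x y : H, inner ℂ (defect (adjoint T) x) y = inner ℂ x (defect (adjoint T) y) :=
    (isSelfAdjoint_defect (adjoint T)).isSymmetric
  simp only [juliaMap_apply, WithLp.prod_inner_apply, WithLp.ofLp_fst, WithLp.ofLp_snd, map_neg,
    defect_neg, inner_add_left, inner_add_right, inner_neg_left, inner_neg_right, neg_apply,
    adjoint_inner_left, adjoint_inner_right, hD, hD']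
  ring

variable {T : H →L[ℂ] H}

theorem juliaMap_neg_juliaMap (hT : ‖T‖ ≤ 1) (z : WithLp 2 (H × H)) :
    juliaMap (-T) (juliaMap T z) = z := by
  have hT' : ‖adjoint T‖ ≤ 1 := by rwa [LinearIsometryEquiv.norm_map]
  have hDD (x : H) : defect T (defect T x) = x - adjoint T (T x) :=
    congr($(defect_mul_self hT) x)
  have hD'D' (y : H) : defect (adjoint T) (defect (adjoint T) y) = y - T (adjoint T y) := by
    simpa [star_eq_adjoint] using congr($(defect_mul_self hT') y)
  have hD'T (x : H) : defect (adjoint T) (T x) = T (defect T x) :=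
    congr($(mul_defect hT) x).symm
  have hTD' (y : H) : adjoint T (defect (adjoint T) y) = defect T (adjoint T y) :=
    congr($(defect_mul_star hT) y).symm
  ext <;>
    simp only [juliaMap_apply, WithLp.toLp_fst, WithLp.toLp_snd, map_add, map_neg, neg_apply,
      neg_neg, defect_neg, hDD, hD'D', hD'T, hTD'] <;>
    abel

theorem norm_juliaMap (hT : ‖T‖ ≤ 1) (z : WithLp 2 (H × H)) : ‖juliaMap T z‖ = ‖z‖ := by
  rw [← sq_eq_sq₀ (norm_nonneg _) (norm_nonneg _), @norm_sq_eq_re_inner ℂ,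
    @norm_sq_eq_re_inner ℂ, inner_juliaMap, juliaMap_neg_juliaMap hT]

noncomputable def julia (hT : ‖T‖ ≤ 1) : WithLp 2 (H × H) ≃ₗᵢ[ℂ] WithLp 2 (H × H) where
  __ := juliaMap T
  invFun := juliaMap (-T)
  left_inv := juliaMap_neg_juliaMap hT
  right_inv z := by
    simpa using juliaMap_neg_juliaMap (T := -T) (by rwa [norm_neg]) z
  norm_map' := norm_juliaMap hT

end Julia

section Schaffer

variable {H : Type*} [NormedAddCommGroup H] [InnerProductSpace ℂ H] [CompleteSpace H]
  {T : H →L[ℂ] H}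

noncomputable def schaffer (hT : ‖T‖ ≤ 1) : lp (fun _ : ℤ => H) 2 ≃ₗᵢ[ℂ] lp (fun _ : ℤ => H) 2 :=
  (lp.updatePairₗᵢ (by decide : (-1 : ℤ) ≠ 0) (julia hT)).trans
    (lp.reindexₗᵢ (by norm_num) (Equiv.subRight 1))

theorem schaffer_apply_zero (hT : ‖T‖ ≤ 1) (ξ : lp (fun _ : ℤ => H) 2) :
    schaffer hT ξ 0 = defect (adjoint T) (ξ (-1)) + T (ξ 0) := by
  change lp.updatePair (-1) 0 (julia hT) ξ (0 - 1) = _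
  simp [lp.updatePair_apply, julia, juliaMap_apply]

theorem schaffer_apply_of_neg (hT : ‖T‖ ≤ 1) (ξ : lp (fun _ : ℤ => H) 2) {m : ℤ} (hm : m < 0) :
    schaffer hT ξ m = ξ (m - 1) := by
  change lp.updatePair (-1) 0 (julia hT) ξ (m - 1) = _
  rw [lp.updatePair_apply (by decide), if_neg (by omega), if_neg (by omega)]

theorem schaffer_iterate_single (hT : ‖T‖ ≤ 1) (x : H) (n : ℕ) :
    (∀ m < 0, (schaffer hT)^[n] (lp.single 2 0 x) m = 0) ∧
      (schaffer hT)^[n] (lp.single 2 0 x) 0 = (T ^ n) x := by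
  induction n with
  | zero =>
    exact ⟨fun m hm => lp.single_apply_ne (E := fun _ => H) 2 0 x hm.ne,
      lp.single_apply_self (E := fun _ => H) 2 0 x⟩
  | succ n ih =>
    simp only [Function.iterate_succ_apply', schaffer_apply_zero, pow_succ', mul_apply_eq_comp]
    refine ⟨fun m hm => ?_, ?_⟩
    · rw [schaffer_apply_of_neg hT _ hm, ih.1 _ (by omega)]
    · rw [ih.1 (-1) (by norm_num), ih.2, map_zero, zero_add]

end Schaffer

/-- Every contraction on a Hilbert space has a unitary dilation. -/
theorem contraction_has_unitary_dilation {H : Type} [NormedAddCommGroup H]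
    [InnerProductSpace ℂ H] [CompleteSpace H] (T : H →L[ℂ] H) (hT : ‖T‖ ≤ 1) :
    Nonempty (UnitaryDilation T) := by
  let U := Unitary.linearIsometryEquiv.symm (schaffer hT)
  have hpow (n : ℕ) : ⇑((U : lp (fun _ : ℤ => H) 2 →L[ℂ] _) ^ n) = (schaffer hT)^[n] :=
    FunLike.coe_pow_eq_iterate _ n
  refine ⟨{ K := lp (fun _ : ℤ => H) 2
            emb := lp.singleₗᵢ ℂ (fun _ : ℤ => H) 2 0
            U := U
            unitary_right := Unitary.mul_star_self_of_mem U.2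
            unitary_left := Unitary.star_mul_self_of_mem U.2
            dilation := fun n x y => ?_ }⟩
  rw [lp.singleₗᵢ_apply, lp.singleₗᵢ_apply, hpow, lp.inner_single_right,
    (schaffer_iterate_single hT x n).2]
end

section
/- (Lemma 2.1, unitary version) Let A, B be commuting isometries on H and let X̃ ∈ B(K̃) be a unitary extension of A. Then there exists a Hilbert space K ⊇ K̃ and commuting unitaries X, Y ∈ B(K) such that X extends X̃ and Y extends B. -/
/-!
Write `Q = X̃⋆`. Since `X̃` is unitary and `X̃ e = e A`, one has
`⟪Q^(n+k) e a, Qⁿ e b⟫ = ⟪a, Aᵏ b⟫`, so, `B` being an isometry commuting with `A`, the family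
`Qⁿ e h` has the same Gram matrix as the family `Qⁿ e (B h)`. Hence `Qⁿ e h ↦ Qⁿ e (B h)`,
extended by the identity on the orthogonal complement, is an isometry `V` of `K̃` extending `B`;
it commutes with `X̃` because `X̃` maps the family into itself compatibly with `h ↦ B h` and `X̃⋆`
preserves its span. Finally, an isometry `V` commuting with a unitary `U` extends to the pair of
commuting unitaries `[[U, 0], [0, U]]` and `[[V, 1 - V V⋆], [0, V⋆]]` on `K̃ ⊕ K̃`.
-/

open ContinuousLinearMap

/-- Data witnessing the unitary version of the weak commutant lifting lemma: a Hilbert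
space `K ⊇ K̃` with commuting unitaries `X, Y` such that `X` extends `X̃` and `Y`
extends `B`. -/
structure UnitaryCommutantLift {H Kt : Type}
    [NormedAddCommGroup H] [InnerProductSpace ℂ H] [CompleteSpace H]
    [NormedAddCommGroup Kt] [InnerProductSpace ℂ Kt] [CompleteSpace Kt]
    (B : H →L[ℂ] H) (e : H →ₗᵢ[ℂ] Kt) (Xt : Kt →L[ℂ] Kt) where
  K : Type
  [grp : NormedAddCommGroup K]
  [ips : InnerProductSpace ℂ K]
  [cpl : CompleteSpace K]
  emb : Kt →ₗᵢ[ℂ] K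
  X : K →L[ℂ] K
  Y : K →L[ℂ] K
  X_unitary_right : X ∘L ContinuousLinearMap.adjoint X = 1
  X_unitary_left : ContinuousLinearMap.adjoint X ∘L X = 1
  Y_unitary_right : Y ∘L ContinuousLinearMap.adjoint Y = 1
  Y_unitary_left : ContinuousLinearMap.adjoint Y ∘L Y = 1
  commute : X ∘L Y = Y ∘L X
  X_extends : ∀ z : Kt, X (emb z) = emb (Xt z)
  Y_extends : ∀ x : H, Y (emb (e x)) = emb (e (B x))

open scoped InnerProductSpace

theorem Commute.star_right_of_mem_unitary {R : Type*} [Monoid R] [StarMul R] {u v : R}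
    (hu : u ∈ unitary R) (h : Commute u v) : Commute u (star v) := by
  rw [commute_unitary_iff_star_right_conjugate hu, mul_assoc, ← h.star_star.eq, ← mul_assoc,
    Unitary.mul_star_self_of_mem hu, one_mul]

section FromBlocks

variable {𝕜 E : Type*} [RCLike 𝕜] [NormedAddCommGroup E] [InnerProductSpace 𝕜 E]

variable (𝕜 E) in
noncomputable def WithLp.linearIsometryInl (F : Type*) [NormedAddCommGroup F]
    [InnerProductSpace 𝕜 F] : E →ₗᵢ[𝕜] WithLp 2 (E × F) where
  toFun x := WithLp.toLp 2 (x, 0)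
  map_add' x y := by simp [← WithLp.toLp_add]
  map_smul' c x := by simp [← WithLp.toLp_smul]
  norm_map' := WithLp.norm_toLp_fst 2 E F

@[simp]
lemma WithLp.linearIsometryInl_apply {F : Type*} [NormedAddCommGroup F] [InnerProductSpace 𝕜 F]
    (x : E) : WithLp.linearIsometryInl 𝕜 E F x = WithLp.toLp 2 (x, 0) :=
  rfl

namespace ContinuousLinearMap

noncomputable def fromBlocks (a b c d : E →L[𝕜] E) : WithLp 2 (E × E) →L[𝕜] WithLp 2 (E × E) :=
  (WithLp.prodContinuousLinearEquiv 2 𝕜 E E).symm.toContinuousLinearMap ∘L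
    (a.coprod b).prod (c.coprod d) ∘L
      (WithLp.prodContinuousLinearEquiv 2 𝕜 E E).toContinuousLinearMap

@[simp]
lemma fromBlocks_apply (a b c d : E →L[𝕜] E) (x : WithLp 2 (E × E)) :
    fromBlocks a b c d x = WithLp.toLp 2 (a x.fst + b x.snd, c x.fst + d x.snd) :=
  rfl

lemma fromBlocks_mul_fromBlocks (a b c d a' b' c' d' : E →L[𝕜] E) :
    fromBlocks a b c d * fromBlocks a' b' c' d' =
      fromBlocks (a * a' + b * c') (a * b' + b * d') (c * a' + d * c') (c * b' + d * d') := by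
  ext x : 1
  simp only [WithLp.ext_iff, Prod.ext_iff, mul_apply_eq_comp, fromBlocks_apply, WithLp.toLp_fst,
    WithLp.toLp_snd, map_add, add_apply]
  constructor <;> abel

lemma fromBlocks_one_zero_zero_one : fromBlocks (1 : E →L[𝕜] E) 0 0 1 = 1 := by
  ext x : 1
  simp [WithLp.ext_iff, Prod.ext_iff]

variable [CompleteSpace E]

lemma star_fromBlocks (a b c d : E →L[𝕜] E) :
    star (fromBlocks a b c d) = fromBlocks (star a) (star c) (star b) (star d) := by
  rw [star_eq_adjoint, eq_comm, eq_adjoint_iff]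
  intro x y
  simp only [star_eq_adjoint, fromBlocks_apply, WithLp.prod_inner_apply, WithLp.ofLp_fst,
    WithLp.ofLp_snd, inner_add_left, inner_add_right, adjoint_inner_left]
  ring

lemma fromBlocks_mem_unitary_of_isometry {v : E →L[𝕜] E} (hv : star v * v = 1) :
    fromBlocks v (1 - v * star v) 0 (star v) ∈
      unitary (WithLp 2 (E × E) →L[𝕜] WithLp 2 (E × E)) := by
  have hp : star (1 - v * star v) = 1 - v * star v := by simp
  have hvp : star v * (1 - v * star v) = 0 := by
    rw [mul_sub, ← mul_assoc, hv, one_mul, mul_one, sub_self]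
  have hpv : (1 - v * star v) * v = 0 := by
    rw [sub_mul, mul_assoc, hv, one_mul, mul_one, sub_self]
  have hpp : (1 - v * star v) * (1 - v * star v) = 1 - v * star v := by
    rw [sub_mul (1 : E →L[𝕜] E), mul_assoc, hvp, mul_zero, one_mul, sub_zero]
  rw [Unitary.mem_iff, star_fromBlocks, hp, star_star, star_zero, fromBlocks_mul_fromBlocks,
    fromBlocks_mul_fromBlocks]
  simp only [hv, hvp, hpv, hpp, mul_zero, zero_mul, add_zero, zero_add, sub_add_cancel,
    add_sub_cancel, fromBlocks_one_zero_zero_one, and_self]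

lemma fromBlocks_diagonal_mem_unitary {u : E →L[𝕜] E} (hu : u ∈ unitary (E →L[𝕜] E)) :
    fromBlocks u 0 0 u ∈ unitary (WithLp 2 (E × E) →L[𝕜] WithLp 2 (E × E)) := by
  rw [Unitary.mem_iff, star_fromBlocks, star_zero, fromBlocks_mul_fromBlocks,
    fromBlocks_mul_fromBlocks]
  simp only [Unitary.star_mul_self_of_mem hu, Unitary.mul_star_self_of_mem hu, mul_zero, zero_mul,
    add_zero, zero_add, fromBlocks_one_zero_zero_one, and_self]

lemma commute_fromBlocks_diagonal {u v : E →L[𝕜] E} (hu : u ∈ unitary (E →L[𝕜] E))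
    (huv : Commute u v) :
    Commute (fromBlocks u 0 0 u) (fromBlocks v (1 - v * star v) 0 (star v)) := by
  have huv' : Commute u (star v) := huv.star_right_of_mem_unitary hu
  have hup : u * (1 - v * star v) = (1 - v * star v) * u := by
    rw [mul_sub, sub_mul, ← mul_assoc, huv.eq, mul_assoc, huv'.eq, ← mul_assoc, mul_one, one_mul]
  rw [commute_iff_eq, fromBlocks_mul_fromBlocks, fromBlocks_mul_fromBlocks, huv.eq, huv'.eq, hup]
  simp

end ContinuousLinearMap

end FromBlocks

section ReindexIsometry

open Finsupp Set Submodule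

variable {𝕜 E ι : Type*} [RCLike 𝕜] [NormedAddCommGroup E] [InnerProductSpace 𝕜 E]

theorem inner_linearCombination_comp_eq {u : ι → E} {β : ι → ι}
    (hβ : ∀ i j, ⟪u (β i), u (β j)⟫_𝕜 = ⟪u i, u j⟫_𝕜) (c d : ι →₀ 𝕜) :
    ⟪linearCombination 𝕜 (u ∘ β) c, linearCombination 𝕜 (u ∘ β) d⟫_𝕜 =
      ⟪linearCombination 𝕜 u c, linearCombination 𝕜 u d⟫_𝕜 := by
  simp [linearCombination_apply, Finsupp.sum_inner, Finsupp.inner_sum, inner_smul_left,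
    inner_smul_right, hβ]

theorem norm_linearCombination_comp_coprod {u : ι → E} {β : ι → ι}
    (hβ : ∀ i j, ⟪u (β i), u (β j)⟫_𝕜 = ⟪u i, u j⟫_𝕜) (x : (ι →₀ 𝕜) × (span 𝕜 (range u))ᗮ) :
    ‖(linearCombination 𝕜 (u ∘ β)).coprod (span 𝕜 (range u))ᗮ.subtype x‖ =
      ‖(linearCombination 𝕜 u).coprod (span 𝕜 (range u))ᗮ.subtype x‖ := by
  obtain ⟨c, y⟩ := x
  have pythagoras : ∀ w ∈ span 𝕜 (range u),
      ‖w + y‖ * ‖w + y‖ = ‖w‖ * ‖w‖ + ‖(y : E)‖ * ‖(y : E)‖ :=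
    fun w hw ↦ norm_add_sq_eq_norm_sq_add_norm_sq_of_inner_eq_zero _ _ (y.2 w hw)
  have hc : ‖linearCombination 𝕜 (u ∘ β) c‖ = ‖linearCombination 𝕜 u c‖ := by
    rw [@norm_eq_sqrt_re_inner 𝕜, @norm_eq_sqrt_re_inner 𝕜, inner_linearCombination_comp_eq hβ]
  have hmem : ∀ v : ι → E, range v ⊆ range u → linearCombination 𝕜 v c ∈ span 𝕜 (range u) :=
    fun v hv ↦ span_mono hv <|
      range_linearCombination (R := 𝕜) (v := v) ▸ LinearMap.mem_range_self _ c
  simp only [LinearMap.coprod_apply, Submodule.subtype_apply]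
  rw [← mul_self_inj (norm_nonneg _) (norm_nonneg _),
    pythagoras _ (hmem _ (range_comp_subset_range β u)), pythagoras _ (hmem u subset_rfl), hc]

variable [CompleteSpace E]

theorem Submodule.dense_sup_orthogonal (K : Submodule 𝕜 E) :
    Dense ((K ⊔ Kᗮ : Submodule 𝕜 E) : Set E) := by
  rw [dense_iff_topologicalClosure_eq_top, topologicalClosure_eq_top_iff, ← inf_orthogonal,
    inf_orthogonal_eq_bot]

theorem denseRange_linearCombination_coprod_orthogonal (u : ι → E) :
    DenseRange ((linearCombination 𝕜 u).coprod (span 𝕜 (range u))ᗮ.subtype) := by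
  rw [DenseRange, ← LinearMap.coe_range, LinearMap.range_coprod, range_linearCombination,
    range_subtype]
  exact (span 𝕜 (range u)).dense_sup_orthogonal

variable (𝕜) in
/-- For `β` preserving the Gram matrix of `u`, the isometry acting as `u i ↦ u (β i)` on the
closed span of `u` and as the identity on its orthogonal complement. -/
noncomputable def reindexIsometry (u : ι → E) (β : ι → ι) : E →L[𝕜] E :=
  ((linearCombination 𝕜 (u ∘ β)).coprod (span 𝕜 (range u))ᗮ.subtype).extendOfNorm
    ((linearCombination 𝕜 u).coprod (span 𝕜 (range u))ᗮ.subtype)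

variable {u : ι → E} {β : ι → ι}

theorem reindexIsometry_apply_coprod (hβ : ∀ i j, ⟪u (β i), u (β j)⟫_𝕜 = ⟪u i, u j⟫_𝕜)
    (x : (ι →₀ 𝕜) × (span 𝕜 (range u))ᗮ) :
    reindexIsometry 𝕜 u β ((linearCombination 𝕜 u).coprod (span 𝕜 (range u))ᗮ.subtype x) =
      (linearCombination 𝕜 (u ∘ β)).coprod (span 𝕜 (range u))ᗮ.subtype x :=
  LinearMap.extendOfNorm_eq (𝕜 := 𝕜) (denseRange_linearCombination_coprod_orthogonal u)
    ⟨1, fun x ↦ by rw [norm_linearCombination_comp_coprod hβ, one_mul]⟩ x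

theorem reindexIsometry_apply (hβ : ∀ i j, ⟪u (β i), u (β j)⟫_𝕜 = ⟪u i, u j⟫_𝕜) (i : ι) :
    reindexIsometry 𝕜 u β (u i) = u (β i) := by
  simpa using reindexIsometry_apply_coprod hβ (single i 1, 0)

theorem reindexIsometry_apply_of_mem_orthogonal
    (hβ : ∀ i j, ⟪u (β i), u (β j)⟫_𝕜 = ⟪u i, u j⟫_𝕜) {y : E} (hy : y ∈ (span 𝕜 (range u))ᗮ) :
    reindexIsometry 𝕜 u β y = y := by
  simpa using reindexIsometry_apply_coprod hβ (0, ⟨y, hy⟩)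

theorem adjoint_comp_reindexIsometry (hβ : ∀ i j, ⟪u (β i), u (β j)⟫_𝕜 = ⟪u i, u j⟫_𝕜) :
    adjoint (reindexIsometry 𝕜 u β) ∘L reindexIsometry 𝕜 u β = 1 := by
  refine (norm_map_iff_adjoint_comp_self (reindexIsometry 𝕜 u β)).mp fun x ↦ ?_
  refine (denseRange_linearCombination_coprod_orthogonal (𝕜 := 𝕜) u).induction_on x
    (isClosed_eq (reindexIsometry 𝕜 u β).continuous.norm continuous_norm) fun x ↦ ?_
  rw [reindexIsometry_apply_coprod hβ, norm_linearCombination_comp_coprod hβ]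

theorem commute_reindexIsometry (hβ : ∀ i j, ⟪u (β i), u (β j)⟫_𝕜 = ⟪u i, u j⟫_𝕜)
    (T : E →L[𝕜] E) (hT : ∀ i, ∃ j, T (u i) = u j ∧ T (u (β i)) = u (β j))
    (hT_adjoint : ∀ i, adjoint T (u i) ∈ span 𝕜 (range u)) :
    Commute T (reindexIsometry 𝕜 u β) := by
  have hT_orth : ∀ y ∈ (span 𝕜 (range u))ᗮ, T y ∈ (span 𝕜 (range u))ᗮ := by
    have hspan : span 𝕜 (range u) ≤ (span 𝕜 (range u)).comap (adjoint T : E →ₗ[𝕜] E) :=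
      span_le.mpr (range_subset_iff.mpr hT_adjoint)
    intro y hy w hw
    rw [← adjoint_inner_left]
    exact hy _ (hspan hw)
  rw [commute_iff_eq]
  refine ContinuousLinearMap.ext_on (s := range u ∪ (span 𝕜 (range u))ᗮ) ?_ ?_
  · rw [span_union, span_eq]
    exact (span 𝕜 (range u)).dense_sup_orthogonal
  · rintro _ (⟨i, rfl⟩ | hy)
    · obtain ⟨j, hj, hβj⟩ := hT i
      rw [mul_apply_eq_comp, mul_apply_eq_comp, reindexIsometry_apply hβ, hj, hβj,
        reindexIsometry_apply hβ]
    · rw [mul_apply_eq_comp, mul_apply_eq_comp, reindexIsometry_apply_of_mem_orthogonal hβ hy,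
        reindexIsometry_apply_of_mem_orthogonal hβ (hT_orth _ hy)]

end ReindexIsometry

theorem star_pow_mul_pow_eq_one {R : Type*} [Monoid R] [StarMul R] {a : R} (ha : star a * a = 1)
    (n : ℕ) : star (a ^ n) * a ^ n = 1 := by
  induction n with
  | zero => simp
  | succ n ih => rw [pow_succ, star_mul, mul_assoc, ← mul_assoc (star (a ^ n)), ih, one_mul, ha]

section AdjointOrbit

variable {𝕜 H E : Type*} [RCLike 𝕜] [NormedAddCommGroup H] [InnerProductSpace 𝕜 H]
  [NormedAddCommGroup E] [InnerProductSpace 𝕜 E] [CompleteSpace E]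

/-- When `U` is unitary and maps `e(H)` into itself, the closed span of the range of this family is
the smallest subspace containing `e(H)` that reduces `U`. -/
noncomputable def adjointOrbit (U : E →L[𝕜] E) (e : H →ₗᵢ[𝕜] E) (p : ℕ × H) : E :=
  (star U ^ p.1) (e p.2)

variable {U : E →L[𝕜] E} {e : H →ₗᵢ[𝕜] E} {A B : H →L[𝕜] H}

theorem inner_adjointOrbit_add_left (hU : U * star U = 1) (hUA : ∀ x, U (e x) = e (A x))
    (n k : ℕ) (a b : H) :
    ⟪adjointOrbit U e (n + k, a), adjointOrbit U e (n, b)⟫_𝕜 = ⟪a, (A ^ k) b⟫_𝕜 := by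
  have hpow : ∀ x, (U ^ k) (e x) = e ((A ^ k) x) := fun x ↦ by
    simpa only [FunLike.coe_pow_eq_iterate] using
      (Function.Semiconj.iterate_right (fun x ↦ (hUA x).symm) k x).symm
  have hQ : star (star U) * star U = 1 := by rwa [star_star]
  rw [adjointOrbit, adjointOrbit, pow_add, mul_apply_eq_comp,
    (inner_map_map_iff_adjoint_comp_self _).mpr (star_pow_mul_pow_eq_one hQ n), ← star_pow,
    star_eq_adjoint, adjoint_inner_left, hpow, e.inner_map_map]

theorem inner_adjointOrbit_map_snd (hU : U * star U = 1) (hUA : ∀ x, U (e x) = e (A x))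
    (hB : ∀ x y, ⟪B x, B y⟫_𝕜 = ⟪x, y⟫_𝕜) (hAB : Commute A B) (i j : ℕ × H) :
    ⟪adjointOrbit U e (Prod.map id B i), adjointOrbit U e (Prod.map id B j)⟫_𝕜 =
      ⟪adjointOrbit U e i, adjointOrbit U e j⟫_𝕜 := by
  wlog hij : j.1 ≤ i.1 generalizing i j
  · rw [← inner_conj_symm, this j i (by omega), inner_conj_symm]
  obtain ⟨m, a⟩ := i
  obtain ⟨n, b⟩ := j
  obtain ⟨k, rfl⟩ : ∃ k, m = n + k := Nat.exists_eq_add_of_le hij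
  rw [Prod.map_apply, Prod.map_apply, id, id, inner_adjointOrbit_add_left hU hUA,
    inner_adjointOrbit_add_left hU hUA, ← mul_apply_eq_comp, (hAB.pow_left k).eq,
    mul_apply_eq_comp, hB]

theorem exists_apply_adjointOrbit_eq (hU : U * star U = 1) (hUA : ∀ x, U (e x) = e (A x))
    (hAB : Commute A B) (i : ℕ × H) :
    ∃ j, U (adjointOrbit U e i) = adjointOrbit U e j ∧
      U (adjointOrbit U e (Prod.map id B i)) = adjointOrbit U e (Prod.map id B j) := by
  obtain ⟨_ | n, a⟩ := i
  · refine ⟨(0, A a), ?_, ?_⟩ <;>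
      simp [adjointOrbit, hUA, ← mul_apply_eq_comp A B, hAB.eq]
  · refine ⟨(n, a), ?_, ?_⟩ <;>
      simp [adjointOrbit, pow_succ', ← mul_apply_eq_comp, hU]

theorem star_apply_adjointOrbit (U : E →L[𝕜] E) (e : H →ₗᵢ[𝕜] E) (n : ℕ) (a : H) :
    star U (adjointOrbit U e (n, a)) = adjointOrbit U e (n + 1, a) := by
  rw [adjointOrbit, adjointOrbit, pow_succ', mul_apply_eq_comp]

end AdjointOrbit

theorem weak_commutant_lifting_unitary_general {H Kt : Type}
    [NormedAddCommGroup H] [InnerProductSpace ℂ H] [CompleteSpace H]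
    [NormedAddCommGroup Kt] [InnerProductSpace ℂ Kt] [CompleteSpace Kt]
    (A B : H →L[ℂ] H)
    (hB : ContinuousLinearMap.adjoint B ∘L B = 1)
    (hAB : A ∘L B = B ∘L A)
    (e : H →ₗᵢ[ℂ] Kt) (Xt : Kt →L[ℂ] Kt)
    (hXt_right : Xt ∘L ContinuousLinearMap.adjoint Xt = 1)
    (hXt_left : ContinuousLinearMap.adjoint Xt ∘L Xt = 1)
    (hXtA : ∀ x : H, Xt (e x) = e (A x)) :
    Nonempty (UnitaryCommutantLift B e Xt) := by
  have hXt : Xt ∈ unitary (Kt →L[ℂ] Kt) := Unitary.mem_iff.mpr ⟨hXt_left, hXt_right⟩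
  have hgram := inner_adjointOrbit_map_snd hXt_right hXtA
    ((inner_map_map_iff_adjoint_comp_self B).mpr hB) hAB
  set V := reindexIsometry ℂ (adjointOrbit Xt e) (Prod.map id B)
  have hV : star V * V = 1 := adjoint_comp_reindexIsometry hgram
  have hXtV : Commute Xt V :=
    commute_reindexIsometry hgram Xt (exists_apply_adjointOrbit_eq hXt_right hXtA hAB)
      fun ⟨n, a⟩ ↦ star_apply_adjointOrbit Xt e n a ▸ Submodule.subset_span ⟨_, rfl⟩
  have hVe : ∀ x, V (e x) = e (B x) := fun x ↦ reindexIsometry_apply hgram (0, x)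
  obtain ⟨hX_left, hX_right⟩ := Unitary.mem_iff.mp (fromBlocks_diagonal_mem_unitary hXt)
  obtain ⟨hY_left, hY_right⟩ := Unitary.mem_iff.mp (fromBlocks_mem_unitary_of_isometry hV)
  exact ⟨{ K := WithLp 2 (Kt × Kt)
           emb := WithLp.linearIsometryInl ℂ Kt Kt
           X := fromBlocks Xt 0 0 Xt
           Y := fromBlocks V (1 - V * star V) 0 (star V)
           X_unitary_right := hX_right
           X_unitary_left := hX_left
           Y_unitary_right := hY_right
           Y_unitary_left := hY_left
           commute := commute_fromBlocks_diagonal hXt hXtV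
           X_extends := fun z ↦ by simp
           Y_extends := fun x ↦ by simp [hVe] }⟩

/-- Weak commutant lifting, unitary version: if `A, B` are commuting isometries on `H`
and `X̃` is a unitary extension of `A` on `K̃ ⊇ H`, then there is a Hilbert space
`K ⊇ K̃` and commuting unitaries `X, Y` on `K` with `X` extending `X̃` and `Y`
extending `B`. -/
theorem weak_commutant_lifting_unitary {H Kt : Type}
    [NormedAddCommGroup H] [InnerProductSpace ℂ H] [CompleteSpace H]
    [NormedAddCommGroup Kt] [InnerProductSpace ℂ Kt] [CompleteSpace Kt]
    (A B : H →L[ℂ] H)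
    (hA : ContinuousLinearMap.adjoint A ∘L A = 1)
    (hB : ContinuousLinearMap.adjoint B ∘L B = 1)
    (hAB : A ∘L B = B ∘L A)
    (e : H →ₗᵢ[ℂ] Kt) (Xt : Kt →L[ℂ] Kt)
    (hXt_right : Xt ∘L ContinuousLinearMap.adjoint Xt = 1)
    (hXt_left : ContinuousLinearMap.adjoint Xt ∘L Xt = 1)
    (hXtA : ∀ x : H, Xt (e x) = e (A x)) :
    Nonempty (UnitaryCommutantLift B e Xt) :=
  weak_commutant_lifting_unitary_general A B hB hAB e Xt hXt_right hXt_left hXtA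
end

section
/- (Main theorem, converse direction, general cycle) If a graph G on {1,...,n} contains a cycle, then there exists an n-tuple of contractions commuting according to G (indeed pairwise commuting) on some Hilbert space H such that no n-tuple of unitaries on any K ⊇ H commuting according to G dilates them. -/
/-!
Put `Aⱼ = [[0, 0], [Bⱼ, 0]]` on `E ⊕ E` with isometries `Bⱼ`; these square-zero operators
pairwise commute. A unitary dilation `Uⱼ` must send `(z, 0)` to `(0, Bⱼ z)`, because the
compression `Aⱼ (z, 0)` already has the full norm `‖z‖`. Commutation of `U_a` and `U_b` along an
edge then gives `f_a ∘ B_b = f_b ∘ B_a` for the isometries `f_j z = Uⱼ (0, z)`.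

Pick an edge `uw` on a cycle `u → w → x ⇝ y → u`, and weights `B_u = R`, `B_w = T` and `Bⱼ = 1`
on the path `x ⇝ y`. The edge relations give `f_x = f_y`, `f_w = f_x ∘ T`, `f_u = f_y ∘ R` and
`f_u ∘ T = f_w ∘ R`, hence `f_y ∘ R T = f_y ∘ T R`, so `R` and `T` commute. Taking for `R`, `T`
the swap and `diag(1, -1)` on `ℂ²` gives the counterexample.
-/

open ContinuousLinearMap

/-- An `n`-tuple of unitaries on some Hilbert space `K ⊇ H` commuting according to
the graph `G` and dilating the `n`-tuple `A` in the word sense: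
`P U_{j₁} ⋯ U_{j_k} |_H = A_{j₁} ⋯ A_{j_k}` for all words, expressed via inner
products against vectors of `H`. -/
structure GraphUnitaryDilation {n : ℕ} {H : Type}
    [NormedAddCommGroup H] [InnerProductSpace ℂ H] [CompleteSpace H]
    (G : SimpleGraph (Fin n)) (A : Fin n → H →L[ℂ] H) where
  K : Type
  [grp : NormedAddCommGroup K]
  [ips : InnerProductSpace ℂ K]
  [cpl : CompleteSpace K]
  emb : H →ₗᵢ[ℂ] K
  U : Fin n → K →L[ℂ] K
  unitary_right : ∀ j, U j ∘L ContinuousLinearMap.adjoint (U j) = 1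
  unitary_left : ∀ j, ContinuousLinearMap.adjoint (U j) ∘L U j = 1
  commute : ∀ i j, G.Adj i j → U i ∘L U j = U j ∘L U i
  dilation : ∀ (w : List (Fin n)) (x y : H),
    (inner ℂ ((w.map U).prod (emb x)) (emb y) : ℂ) =
      (inner ℂ ((w.map A).prod x) y : ℂ)

/-- A counterexample for a graph `G`: a Hilbert space `H` and contractions
`A₁, …, Aₙ` on `H` which pairwise commute (in particular, commute according to `G`)
but admit no `n`-tuple of unitaries on any `K ⊇ H` commuting according to `G`
that dilates them. -/
structure GraphCounterexample {n : ℕ} (G : SimpleGraph (Fin n)) where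
  H : Type
  [grp : NormedAddCommGroup H]
  [ips : InnerProductSpace ℂ H]
  [cpl : CompleteSpace H]
  A : Fin n → H →L[ℂ] H
  contraction : ∀ j, ‖A j‖ ≤ 1
  commute : ∀ i j, A i ∘L A j = A j ∘L A i
  no_dilation : ¬ Nonempty (GraphUnitaryDilation G A)


namespace SimpleGraph

variable {V : Type*} {G : SimpleGraph V}

lemma Walk.apply_eq_of_forall_dart {α : Type*} (f : V → α) :
    ∀ {x y : V} (p : G.Walk x y), (∀ d ∈ p.darts, f d.fst = f d.snd) → f x = f y
  | _, _, .nil, _ => rfl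
  | _, _, .cons _ p, hf =>
    (hf _ List.mem_cons_self).trans <|
      apply_eq_of_forall_dart f p fun d hd => hf d (List.mem_cons_of_mem _ hd)

lemma exists_adj_walk_of_not_isAcyclic (hG : ¬ G.IsAcyclic) :
    ∃ (u w x y : V) (p : G.Walk x y), G.Adj u w ∧ G.Adj w x ∧ G.Adj y u ∧
      u ∉ p.support ∧ w ∉ p.support := by
  simp only [IsAcyclic, not_forall, not_not] at hG
  obtain ⟨u, c, hc⟩ := hG
  cases c with
  | nil => exact absurd hc Walk.not_isCycle_nil
  | cons huw q =>
    have hlen := hc.three_le_length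
    have hq := ((Walk.cons_isCycle_iff q huw).1 hc).1
    cases q with
    | nil => simp at hlen
    | cons hwx₀ q' =>
      obtain ⟨y, r, hyu, hr⟩ := Walk.exists_cons_eq_concat hwx₀ q'
      rw [hr] at hq hlen
      cases r with
      | nil => simp at hlen
      | cons hwx p =>
        rw [Walk.concat_isPath_iff, Walk.cons_isPath_iff] at hq
        simp only [Walk.support_cons, List.mem_cons, not_or] at hq
        exact ⟨u, _, _, y, p, huw, hwx, hyu, hq.2.2, hq.1.2⟩

end SimpleGraph

open scoped InnerProductSpace

section

variable {𝕜 E : Type*} [RCLike 𝕜] [NormedAddCommGroup E] [InnerProductSpace 𝕜 E]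

lemma eq_of_norm_le_of_inner_eq_norm_sq {u v : E} (hn : ‖u‖ ≤ ‖v‖)
    (hi : ⟪u, v⟫_𝕜 = (‖v‖ : 𝕜) ^ 2) : u = v := by
  have hre : RCLike.re ⟪u, v⟫_𝕜 = ‖v‖ ^ 2 := by rw [hi, ← RCLike.ofReal_pow, RCLike.ofReal_re]
  have hsq : ‖u - v‖ ^ 2 ≤ 0 := by
    rw [@norm_sub_sq 𝕜, hre]
    nlinarith [norm_nonneg u]
  exact sub_eq_zero.mp <| norm_eq_zero.mp <|
    (pow_eq_zero_iff two_ne_zero).mp (le_antisymm hsq (sq_nonneg _))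

variable (𝕜) in
/-- The block operator `[[0, 0], [B, 0]]` on `E ⊕ E`. -/
def lowerShift (B : E →L[𝕜] E) : WithLp 2 (E × E) →L[𝕜] WithLp 2 (E × E) :=
  (WithLp.prodContinuousLinearEquiv 2 𝕜 E E).symm.toContinuousLinearMap ∘L
    inr 𝕜 E E ∘L B ∘L fst 𝕜 E E ∘L
    (WithLp.prodContinuousLinearEquiv 2 𝕜 E E).toContinuousLinearMap

lemma lowerShift_apply (B : E →L[𝕜] E) (v : WithLp 2 (E × E)) :
    lowerShift 𝕜 B v = WithLp.toLp 2 (0, B v.fst) := rfl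

lemma lowerShift_comp_lowerShift (B C : E →L[𝕜] E) : lowerShift 𝕜 B ∘L lowerShift 𝕜 C = 0 := by
  ext v : 1
  simp [lowerShift_apply]

lemma norm_lowerShift_le (B : E →L[𝕜] E) : ‖lowerShift 𝕜 B‖ ≤ ‖B‖ := by
  refine opNorm_le_bound _ (norm_nonneg B) fun v => ?_
  rw [lowerShift_apply, WithLp.norm_toLp_snd]
  exact (B.le_opNorm _).trans (by gcongr; exact WithLp.norm_fst_le (x := v))

end

namespace GraphUnitaryDilation

attribute [instance] grp ips cpl

section

variable {n : ℕ} {G : SimpleGraph (Fin n)} {H : Type} [NormedAddCommGroup H]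
  [InnerProductSpace ℂ H] [CompleteSpace H] {A : Fin n → H →L[ℂ] H}
  (D : GraphUnitaryDilation G A)

lemma norm_U_apply (j : Fin n) (k : D.K) : ‖D.U j k‖ = ‖k‖ :=
  (norm_map_iff_adjoint_comp_self _).2 (D.unitary_left j) k

lemma U_injective (j : Fin n) : Function.Injective (D.U j) :=
  ((isometry_iff_adjoint_comp_self _).2 (D.unitary_left j)).injective

lemma inner_U_emb (j : Fin n) (x y : H) : ⟪D.U j (D.emb x), D.emb y⟫_ℂ = ⟪A j x, y⟫_ℂ := by
  simpa using D.dilation [j] x y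

lemma U_emb_of_norm_eq {j : Fin n} {x : H} (hx : ‖A j x‖ = ‖x‖) :
    D.U j (D.emb x) = D.emb (A j x) := by
  refine eq_of_norm_le_of_inner_eq_norm_sq (𝕜 := ℂ) ?_ ?_
  · rw [norm_U_apply, D.emb.norm_map, D.emb.norm_map, hx]
  · rw [inner_U_emb, D.emb.norm_map, ← inner_self_eq_norm_sq_to_K]

end

section LowerShift

variable {n : ℕ} {G : SimpleGraph (Fin n)} {E : Type} [NormedAddCommGroup E]
  [InnerProductSpace ℂ E] [CompleteSpace E] {B : Fin n → E →L[ℂ] E}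

lemma U_emb_inl (D : GraphUnitaryDilation G fun j => lowerShift ℂ (B j))
    (hB : ∀ j z, ‖B j z‖ = ‖z‖) (j : Fin n) (z : E) :
    D.U j (D.emb (WithLp.toLp 2 (z, 0))) = D.emb (WithLp.toLp 2 (0, B j z)) :=
  D.U_emb_of_norm_eq (by simp [lowerShift_apply, hB])

lemma U_emb_inr_eq_of_adj (D : GraphUnitaryDilation G fun j => lowerShift ℂ (B j))
    (hB : ∀ j z, ‖B j z‖ = ‖z‖) {a b : Fin n} (hab : G.Adj a b) (z : E) :
    D.U a (D.emb (WithLp.toLp 2 (0, B b z))) = D.U b (D.emb (WithLp.toLp 2 (0, B a z))) := by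
  simpa [U_emb_inl D hB] using congr($(D.commute a b hab) (D.emb (WithLp.toLp 2 (z, 0))))

theorem commute_of_cycle (D : GraphUnitaryDilation G fun j => lowerShift ℂ (B j))
    (hB : ∀ j z, ‖B j z‖ = ‖z‖) {u w x y : Fin n} (p : G.Walk x y)
    (huw : G.Adj u w) (hwx : G.Adj w x) (hyu : G.Adj y u) (hp : ∀ j ∈ p.support, B j = 1) :
    B u * B w = B w * B u := by
  let f : Fin n → E → D.K := fun j z => D.U j (D.emb (WithLp.toLp 2 (0, z)))
  have hadj : ∀ {a b}, G.Adj a b → ∀ z, f a (B b z) = f b (B a z) := fun hab z =>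
    D.U_emb_inr_eq_of_adj hB hab z
  have hxy : f x = f y := p.apply_eq_of_forall_dart f fun d hd => funext fun z => by
    simpa [hp _ (p.dart_fst_mem_support_of_mem_darts hd),
      hp _ (p.dart_snd_mem_support_of_mem_darts hd)] using hadj d.adj z
  have hfy_inj : Function.Injective (f y) := (D.U_injective y).comp <| D.emb.injective.comp <|
    (WithLp.toLp_injective 2).comp (Prod.mk_right_injective 0)
  ext z : 1
  apply hfy_inj
  calc f y ((B u * B w) z) = f u (B w z) := by
        simpa [hp y p.end_mem_support] using hadj hyu (B w z)
    _ = f w (B u z) := hadj huw z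
    _ = f y ((B w * B u) z) := by
        simpa [hp x p.start_mem_support, hxy] using hadj hwx (B u z)

end LowerShift

end GraphUnitaryDilation

open Matrix in
lemma exists_unitary_not_commute :
    ∃ R T : EuclideanSpace ℂ (Fin 2) →L[ℂ] EuclideanSpace ℂ (Fin 2),
      R ∈ unitary _ ∧ T ∈ unitary _ ∧ R * T ≠ T * R := by
  let φ := toEuclideanCLM (n := Fin 2) (𝕜 := ℂ)
  refine ⟨φ !![0, 1; 1, 0], φ !![1, 0; 0, -1], Unitary.map_mem φ ?_, Unitary.map_mem φ ?_, ?_⟩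
  · rw [← unitaryGroup, mem_unitaryGroup_iff]
    ext i j; fin_cases i <;> fin_cases j <;> simp [mul_apply, Fin.sum_univ_two]
  · rw [← unitaryGroup, mem_unitaryGroup_iff]
    ext i j; fin_cases i <;> fin_cases j <;> simp [mul_apply, Fin.sum_univ_two]
  · rw [← map_mul φ, ← map_mul φ, Ne, EmbeddingLike.apply_eq_iff_eq, mul_fin_two, mul_fin_two]
    intro h
    norm_num [← Matrix.ext_iff, Fin.forall_fin_two] at h

/-- Main theorem, converse direction: if a graph `G` on `{1, …, n}` contains a cycle,
then there is an `n`-tuple of (pairwise commuting) contractions on some Hilbert space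
with no unitary dilation commuting according to `G`. -/
theorem cycle_graph_counterexample {n : ℕ} (G : SimpleGraph (Fin n))
    (hG : ¬ G.IsAcyclic) : Nonempty (GraphCounterexample G) := by
  obtain ⟨u, w, x, y, p, huw, hwx, hyu, hu, hw⟩ := G.exists_adj_walk_of_not_isAcyclic hG
  obtain ⟨R, T, hR, hT, hRT⟩ := exists_unitary_not_commute
  let B : Fin n → _ := Function.update (Function.update 1 u R) w T
  have hB : ∀ j z, ‖B j z‖ = ‖z‖ := by
    intro j z
    simp only [B, Function.update_apply]
    split_ifs
    exacts [norm_map_of_mem_unitary hT z, norm_map_of_mem_unitary hR z, rfl]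
  have hB1 : ∀ j ∈ p.support, B j = 1 := fun j hj => by
    simp [B, ne_of_mem_of_not_mem hj hu, ne_of_mem_of_not_mem hj hw]
  refine ⟨{ H := WithLp 2 (_ × _)
            A := fun j => lowerShift ℂ (B j)
            contraction := fun j => (norm_lowerShift_le _).trans <|
              opNorm_le_bound _ zero_le_one fun z => by simp [hB]
            commute := fun i j => by rw [lowerShift_comp_lowerShift, lowerShift_comp_lowerShift]
            no_dilation := fun ⟨D⟩ => hRT ?_ }⟩
  simpa [B, huw.ne, huw.ne'] using D.commute_of_cycle hB p huw hwx hyu hB1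
end
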